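/- Let φ : X → Y be an extension of compact minimal flows of a topological group T. Then the induced extensions of hyperflows 2^φ : 2^X → 2^Y and 2^{2^φ} : 2^{2^X} → 2^{2^Y} are both semi-open. -/

import Mathlib

/-- The hyperspace `2^X` of all nonempty closed subsets of `X`. -/
def Hyper (X : Type*) [TopologicalSpace X] : Type _ := {K : Set X // IsClosed K ∧ K.Nonempty}

/-- The Vietoris topology on the hyperspace, generated by the subbasic sets
`{K | K ⊆ U}` and `{K | K ∩ U ≠ ∅}` for `U` open. -/
instance Hyper.instTopologicalSpace (X : Type*) [TopologicalSpace X] :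
    TopologicalSpace (Hyper X) :=
  TopologicalSpace.generateFrom
    ({S | ∃ U : Set X, IsOpen U ∧ S = {K : Hyper X | K.1 ⊆ U}} ∪
     {S | ∃ U : Set X, IsOpen U ∧ S = {K : Hyper X | (K.1 ∩ U).Nonempty}})

/-- The induced map `2^f : 2^X → 2^Y`, `K ↦ f[K]`.  (For closed subsets of a compact
space and continuous `f` into a Hausdorff space the image `f[K]` is closed, so taking
the closure below is redundant and this is indeed `K ↦ f[K]`.) -/
def hyperMap {X Y : Type*} [TopologicalSpace X] [TopologicalSpace Y] (f : X → Y) :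
    Hyper X → Hyper Y :=
  fun K => ⟨closure (f '' K.1), isClosed_closure, (K.2.2.image f).closure⟩

/-- A continuous surjection `g : A → B` is *semi-open* if for every nonempty open set
`U ⊆ A`, the interior of the image `g '' U` is nonempty. -/
def SemiOpen {A B : Type*} [TopologicalSpace A] [TopologicalSpace B] (g : A → B) : Prop :=
  ∀ U : Set A, IsOpen U → U.Nonempty → (interior (g '' U)).Nonempty

/-!
By minimality, finitely many translates of a nonempty open `V ⊆ X` cover `X`, so finitely many
translates of the closed set `φ '' closure V` cover `Y`; by Baire one of them, hence
`φ '' closure V` itself, has nonempty interior. So `φ` is semi-open.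

Semi-openness lifts from `f` to `2^f`: a basic Vietoris open set `⟨U₁, …, Uₙ⟩` (the closed sets
inside `⋃ Uᵢ` meeting every `Uᵢ`) around `K` contains `⟨W₁, …, Wₙ⟩` with `Wᵢ` open and
`closure Wᵢ ⊆ Uᵢ`, and every `L` in the nonempty open set `⟨int f(W₁), …, int f(Wₙ)⟩` is the
image of `⋃ᵢ closure Wᵢ ∩ f⁻¹ L ∈ ⟨U₁, …, Uₙ⟩`. As `2^X` is again compact Hausdorff (it is the
space of nonempty compacta), the lift applies twice.
-/

open Set Topology TopologicalSpace

namespace Hyper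

attribute [local instance] TopologicalSpace.vietoris

variable {X Y : Type*} [TopologicalSpace X] [TopologicalSpace Y]

theorem isEmbedding_val : IsEmbedding (fun K : Hyper X => K.1) where
  eq_induced := by
    rw [TopologicalSpace.vietoris, induced_generateFrom_eq, image_union, image_image, image_image]
    refine congrArg generateFrom (congrArg₂ (· ∪ ·) ?_ ?_) <;> ext S <;>
      exact exists_congr fun U => and_congr_right fun _ => eq_comm
  injective _ _ := Subtype.ext

def basic (u : Set (Set X)) : Set (Hyper X) :=
  {K | K.1 ⊆ ⋃₀ u ∧ ∀ U ∈ u, (K.1 ∩ U).Nonempty}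

theorem isTopologicalBasis_basic :
    IsTopologicalBasis (basic '' {u : Set (Set X) | u.Finite ∧ ∀ U ∈ u, IsOpen U}) := by
  have := vietoris.isTopologicalBasis.isInducing (isEmbedding_val (X := X)).isInducing
  rwa [image_image] at this

def homeomorphNonemptyCompacts [CompactSpace X] [T2Space X] : Hyper X ≃ₜ NonemptyCompacts X where
  toFun K := ⟨⟨K.1, K.2.1.isCompact⟩, K.2.2⟩
  invFun L := ⟨L, L.isCompact.isClosed, L.nonempty⟩
  left_inv _ := rfl
  right_inv _ := rfl
  continuous_toFun := NonemptyCompacts.isEmbedding_coe.continuous_iff.2 isEmbedding_val.continuous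
  continuous_invFun := isEmbedding_val.continuous_iff.2 NonemptyCompacts.isEmbedding_coe.continuous

instance [CompactSpace X] [T2Space X] : CompactSpace (Hyper X) :=
  homeomorphNonemptyCompacts.symm.compactSpace

instance [CompactSpace X] [T2Space X] : T2Space (Hyper X) :=
  homeomorphNonemptyCompacts.isEmbedding.t2Space

theorem coe_hyperMap [CompactSpace X] [T2Space Y] {f : X → Y} (hf : Continuous f) (K : Hyper X) :
    (hyperMap f K).1 = f '' K.1 :=
  (K.2.1.isCompact.image hf).isClosed.closure_eq

theorem continuous_hyperMap [CompactSpace X] [T2Space Y] {f : X → Y} (hf : Continuous f) :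
    Continuous (hyperMap f) :=
  isEmbedding_val.continuous_iff.2 <| by
    simpa only [Function.comp_def, coe_hyperMap hf] using
      hf.image_vietoris.comp isEmbedding_val.continuous

theorem basic_nonempty [T1Space X] {u : Set (Set X)} (hu : u.Finite) (hne : u.Nonempty)
    (h : ∀ U ∈ u, U.Nonempty) : (basic u).Nonempty := by
  have : Nonempty X := ⟨(h _ hne.some_mem).some⟩
  choose! p hp using h
  refine ⟨⟨p '' u, (hu.image p).isClosed, hne.image p⟩, ?_,
    fun U hU => ⟨p U, mem_image_of_mem p hU, hp U hU⟩⟩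
  rintro _ ⟨U, hU, rfl⟩
  exact mem_sUnion_of_mem (hp U hU) hU

theorem basic_image_subset_image_hyperMap [CompactSpace X] [T2Space Y] {f : X → Y}
    (hf : Continuous f) {u : Set (Set X)} (hu : u.Finite) {V : Set X → Set Y} {W : Set X → Set X}
    (hW : ∀ U ∈ u, closure (W U) ⊆ U) (hV : ∀ U ∈ u, V U ⊆ f '' W U) :
    basic (V '' u) ⊆ hyperMap f '' basic u := by
  rintro L ⟨hLV, hLmeets⟩
  rw [sUnion_image] at hLV
  rw [forall_mem_image] at hLmeets
  set K := ⋃ U ∈ u, closure (W U) ∩ f ⁻¹' L.1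
  have hK_closed : IsClosed K :=
    hu.isClosed_biUnion fun U _ => isClosed_closure.inter (L.2.1.preimage hf)
  have hK_image : f '' K = L.1 := by
    refine Subset.antisymm (image_subset_iff.2 (iUnion₂_subset fun U _ => inter_subset_right)) ?_
    intro y hy
    obtain ⟨U, hU, hyV⟩ := mem_iUnion₂.1 (hLV hy)
    obtain ⟨x, hxW, rfl⟩ := hV U hU hyV
    exact ⟨x, mem_biUnion hU ⟨subset_closure hxW, hy⟩, rfl⟩
  have hK_meets : ∀ U ∈ u, (K ∩ U).Nonempty := by
    intro U hU
    obtain ⟨y, hyL, hyV⟩ := hLmeets hU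
    obtain ⟨x, hxW, rfl⟩ := hV U hU hyV
    exact ⟨x, mem_biUnion hU ⟨subset_closure hxW, hyL⟩, hW U hU (subset_closure hxW)⟩
  have hK_sub : K ⊆ ⋃₀ u :=
    iUnion₂_subset fun U hU => inter_subset_left.trans ((hW U hU).trans (subset_sUnion_of_mem hU))
  refine ⟨⟨K, hK_closed, (hK_image ▸ L.2.2).of_image⟩, ⟨hK_sub, hK_meets⟩, ?_⟩
  exact Subtype.ext ((coe_hyperMap hf _).trans hK_image)

theorem semiOpen_hyperMap [CompactSpace X] [RegularSpace X] [T2Space Y] {f : X → Y}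
    (hf : Continuous f) (hf_semiOpen : SemiOpen f) : SemiOpen (hyperMap f) := by
  rintro 𝒲 h𝒲 ⟨K₀, hK₀⟩
  obtain ⟨_, ⟨u, ⟨hu, hu_open⟩, rfl⟩, hK₀u, hu𝒲⟩ :=
    isTopologicalBasis_basic.exists_subset_of_mem_open hK₀ h𝒲
  have hshrink : ∀ U ∈ u, ∃ W, IsOpen W ∧ W.Nonempty ∧ closure W ⊆ U := by
    intro U hU
    obtain ⟨x, -, hxU⟩ := hK₀u.2 U hU
    obtain ⟨W, ⟨hxW, hW⟩, hWU⟩ :=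
      (hasBasis_opens_closure x).mem_iff.1 ((hu_open U hU).mem_nhds hxU)
    exact ⟨W, hW, ⟨x, hxW⟩, hWU⟩
  choose! W hW_open hW_ne hWU using hshrink
  set V := fun U => interior (f '' W U)
  have hO_open : IsOpen (basic (V '' u)) :=
    isTopologicalBasis_basic.isOpen
      ⟨_, ⟨hu.image V, forall_mem_image.2 fun _ _ => isOpen_interior⟩, rfl⟩
  have hO_ne : (basic (V '' u)).Nonempty :=
    basic_nonempty (hu.image V) ((K₀.2.2.mono hK₀u.1).of_sUnion.image V)
      (forall_mem_image.2 fun U hU => hf_semiOpen _ (hW_open U hU) (hW_ne U hU))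
  have hO_sub : basic (V '' u) ⊆ hyperMap f '' 𝒲 :=
    (basic_image_subset_image_hyperMap hf hu hWU fun _ _ => interior_subset).trans
      (image_mono hu𝒲)
  exact hO_ne.mono (interior_maximal hO_sub hO_open)

end Hyper

open MulAction Pointwise in
theorem semiOpen_of_isMinimal {T X Y : Type*} [Group T] [TopologicalSpace X] [TopologicalSpace Y]
    [MulAction T X] [MulAction T Y] [IsMinimal T X] [ContinuousConstSMul T X]
    [ContinuousConstSMul T Y] [CompactSpace X] [RegularSpace X] [T2Space Y] [BaireSpace Y]
    {f : X → Y} (hf : Continuous f) (hf_surj : Function.Surjective f)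
    (hf_equiv : ∀ (t : T) (x : X), f (t • x) = t • f x) : SemiOpen f := by
  rintro U hU ⟨x₀, hx₀⟩
  obtain ⟨V, ⟨hx₀V, hV⟩, hVU⟩ := (hasBasis_opens_closure x₀).mem_iff.1 (hU.mem_nhds hx₀)
  obtain ⟨I, hI⟩ := isCompact_univ.exists_finite_cover_smul T hV ⟨x₀, hx₀V⟩
  have hcover : ⋃ t : I, (t : T) • (f '' closure V) = univ := by
    refine eq_univ_of_forall fun y => ?_
    obtain ⟨x, rfl⟩ := hf_surj y
    obtain ⟨t, ht, v, hv, rfl⟩ : ∃ t ∈ I, x ∈ t • V := by simpa using hI (mem_univ x)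
    exact mem_iUnion.2 ⟨⟨t, ht⟩, f v, mem_image_of_mem f (subset_closure hv), (hf_equiv t v).symm⟩
  have : Nonempty Y := ⟨f x₀⟩
  obtain ⟨t, ht⟩ := nonempty_interior_of_iUnion_of_closed
    (fun t : I => (isClosed_closure.isCompact.image hf).isClosed.smul (t : T)) hcover
  rw [interior_smul, smul_set_nonempty] at ht
  exact ht.mono (interior_mono (image_mono hVU))

theorem semiOpen_hyperMap_of_minimal
    {T X Y : Type*} [Group T] [TopologicalSpace T]
    [TopologicalSpace X] [CompactSpace X] [T2Space X]
    [MulAction T X] [ContinuousSMul T X]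
    [TopologicalSpace Y] [CompactSpace Y] [T2Space Y]
    [MulAction T Y] [ContinuousSMul T Y]
    {φ : X → Y} (hc : Continuous φ) (hs : Function.Surjective φ)
    (hequiv : ∀ (t : T) (x : X), φ (t • x) = t • φ x)
    (hminX : ∀ x : X, Dense (MulAction.orbit T x)) :
    SemiOpen (hyperMap φ) ∧ SemiOpen (hyperMap (hyperMap φ)) := by
  have : MulAction.IsMinimal T X := ⟨hminX⟩
  have hφ : SemiOpen φ := semiOpen_of_isMinimal hc hs hequiv
  have h2φ : SemiOpen (hyperMap φ) := Hyper.semiOpen_hyperMap hc hφ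
  exact ⟨h2φ, Hyper.semiOpen_hyperMap (Hyper.continuous_hyperMap hc) h2φ⟩
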